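/- arXiv:1805.03151 — 3 statements merged into one kernel-verified Lean document; each statement's English description precedes it below -/
import Mathlib

section
/- Let Σ be a finite alphabet with r = |Σ| ≥ 2 and let P ⊊ Σ be a proper subset with Σ \ P nonempty. The fairness-complement language L = {x ∈ Σ^ω : ∃ N, ∀ n ≥ N, x n ∉ P} (the language of FG ¬P) has Hausdorff dimension log_r |Σ \ P| in the metric d(u,v) = r^{-(common prefix length)}. -/
open Filter MeasureTheory Set
open scoped ENNReal

open scoped Classical in
noncomputable def wedist {α : Type*} [Fintype α] (u v : ℕ → α) : ℝ≥0∞ :=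
  if u = v then 0 else ((Fintype.card α : ℝ≥0∞))⁻¹ ^ (PiNat.firstDiff u v)

/-- The metric space on `ℕ → α` with `d(u,v) = r^{-n}`, `r = |α|`,
`n` the length of the longest common prefix. -/
noncomputable def wspace (α : Type*) [Fintype α] : EMetricSpace (ℕ → α) where
  edist := wedist
  edist_self u := by simp [wedist]
  edist_comm u v := by
    rcases eq_or_ne u v with h | h
    · simp [wedist, h]
    · simp only [wedist, if_neg h, if_neg h.symm, PiNat.firstDiff_comm]
  edist_triangle u v w := by
    rcases eq_or_ne u w with huw | huw
    · simp [wedist, huw]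
    · rcases eq_or_ne u v with huv | huv
      · subst huv; simp [wedist]
      · rcases eq_or_ne v w with hvw | hvw
        · subst hvw; simp [wedist, huw]
        · have hne : Nonempty α := ⟨u 0⟩
          have hq : ((Fintype.card α : ℝ≥0∞))⁻¹ ≤ 1 := by
            rw [ENNReal.inv_le_one]
            exact_mod_cast Nat.one_le_iff_ne_zero.mpr Fintype.card_ne_zero
          have hmin := PiNat.min_firstDiff_le u v w huw
          simp only [wedist, if_neg huw, if_neg huv, if_neg hvw]
          calc ((Fintype.card α : ℝ≥0∞))⁻¹ ^ PiNat.firstDiff u w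
              ≤ ((Fintype.card α : ℝ≥0∞))⁻¹ ^
                  (min (PiNat.firstDiff u v) (PiNat.firstDiff v w)) :=
                pow_le_pow_of_le_one zero_le hq hmin
            _ ≤ _ := by
                rcases min_cases (PiNat.firstDiff u v) (PiNat.firstDiff v w) with ⟨h1, _⟩ | ⟨h1, _⟩ <;> rw [h1]
                · exact le_self_add
                · exact le_add_self
  eq_of_edist_eq_zero := by
    intro u v h
    by_contra hne
    simp only [wedist, if_neg hne] at h
    exact pow_ne_zero _ (ENNReal.inv_ne_zero.mpr (ENNReal.natCast_ne_top _)) h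

/-- Hausdorff dimension of an ω-language in the metric `d(u,v) = |α|^{-(common prefix length)}`. -/
noncomputable def wdimH {α : Type*} [Fintype α] (L : Set (ℕ → α)) : ℝ≥0∞ :=
  @dimH _ (wspace α) L


section Aux

open scoped NNReal

attribute [local instance] wspace

variable {α : Type*} [Fintype α]

lemma wedist_eq_of_ne {u v : ℕ → α} (h : u ≠ v) :
    edist u v = ((Fintype.card α : ℝ≥0∞))⁻¹ ^ (PiNat.firstDiff u v) := by
  show wedist u v = _
  rw [wedist, if_neg h]

lemma wdimH_eq (L : Set (ℕ → α)) : wdimH L = dimH L := rfl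

lemma winv_le_one (hcard : 2 ≤ Fintype.card α) :
    ((Fintype.card α : ℝ≥0∞))⁻¹ ≤ 1 := by
  rw [ENNReal.inv_le_one]
  exact_mod_cast le_trans one_le_two hcard

lemma wdiam_le (hcard : 2 ≤ Fintype.card α) {s : Set (ℕ → α)} {n : ℕ}
    (h : ∀ u ∈ s, ∀ v ∈ s, ∀ i < n, u i = v i) :
    EMetric.diam s ≤ ((Fintype.card α : ℝ≥0∞))⁻¹ ^ n := by
  apply EMetric.diam_le
  intro u hu v hv
  rcases eq_or_ne u v with rfl | hne
  · simp
  · rw [wedist_eq_of_ne hne]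
    apply pow_le_pow_of_le_one zero_le (winv_le_one hcard)
    by_contra hlt
    push_neg at hlt
    exact PiNat.apply_firstDiff_ne hne (h u hu v hv _ hlt)


variable {P : Set α}

/-- prefix-attaching map -/
def wg (N : ℕ) (w : Fin N → α) (x : ℕ → α) : ℕ → α :=
  fun k => if h : k < N then w ⟨k, h⟩ else x (k - N)

lemma wg_lipschitz (hcard : 2 ≤ Fintype.card α) (N : ℕ) (w : Fin N → α) :
    LipschitzWith 1 (wg (α := α) N w) := by
  intro x y
  rcases eq_or_ne x y with rfl | hne
  · simp
  have hgne : wg N w x ≠ wg N w y := by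
    intro hcon
    apply PiNat.apply_firstDiff_ne hne
    have := congrFun hcon (PiNat.firstDiff x y + N)
    simpa [wg, Nat.add_sub_cancel] using this
  rw [ENNReal.coe_one, one_mul, wedist_eq_of_ne hne, wedist_eq_of_ne hgne]
  apply pow_le_pow_of_le_one zero_le (winv_le_one hcard)
  by_contra hlt
  push_neg at hlt
  apply PiNat.apply_firstDiff_ne hgne
  set j := PiNat.firstDiff (wg N w x) (wg N w y) with hj
  show wg N w x j = wg N w y j
  unfold wg
  split
  · rfl
  · exact PiNat.apply_eq_of_lt_firstDiff (lt_of_le_of_lt (Nat.sub_le _ _) hlt)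

lemma fair_subset_union (hcard : 2 ≤ Fintype.card α) :
    {x : ℕ → α | ∃ N, ∀ n ≥ N, x n ∉ P} ⊆
      ⋃ (N : ℕ) (w : Fin N → α), wg N w '' {x : ℕ → α | ∀ n, x n ∈ Pᶜ} := by
  rintro x ⟨N, hN⟩
  refine Set.mem_iUnion.2 ⟨N, Set.mem_iUnion.2 ⟨fun i => x i, ⟨fun k => x (k + N), ?_, ?_⟩⟩⟩
  · intro n
    exact hN (n + N) (Nat.le_add_left _ _)
  · funext k
    unfold wg
    split
    · rfl
    · rename_i h
      push_neg at h
      show x (k - N + N) = x k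
      rw [Nat.sub_add_cancel h]

lemma dimH_fair_eq (hcard : 2 ≤ Fintype.card α) :
    dimH {x : ℕ → α | ∃ N, ∀ n ≥ N, x n ∉ P} =
      dimH {x : ℕ → α | ∀ n, x n ∈ Pᶜ} := by
  apply le_antisymm
  · refine le_trans (dimH_mono (fair_subset_union hcard)) ?_
    rw [dimH_iUnion]
    refine iSup_le fun N => ?_
    rw [dimH_iUnion]
    refine iSup_le fun w => ?_
    exact LipschitzWith.dimH_image_le (wg_lipschitz hcard N w) _
  · apply dimH_mono
    intro x hx
    exact ⟨0, fun n _ => hx n⟩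


lemma dimH_S_le (hcard : 2 ≤ Fintype.card α) (P : Set α) (hm1 : 0 < (Pᶜ : Set α).ncard) :
    dimH {x : ℕ → α | ∀ n, x n ∈ Pᶜ} ≤
      ENNReal.ofReal (Real.logb (Fintype.card α) ((Pᶜ : Set α).ncard)) := by
  classical
  borelize (ℕ → α)
  set R := Fintype.card α with hR
  set m := (Pᶜ : Set α).ncard with hm
  have hR1 : (1 : ℝ) < R := by exact_mod_cast hcard
  have hmR : (1:ℝ) ≤ m := by exact_mod_cast hm1
  set q : ℝ≥0∞ := ((R : ℝ≥0∞))⁻¹ with hq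
  have hq1 : q < 1 := by
    rw [hq, ENNReal.inv_lt_one]
    exact_mod_cast lt_of_lt_of_le one_lt_two hcard
  letI : Fintype ↥(Pᶜ : Set α) := (Set.toFinite _).fintype
  have hcardPc : Fintype.card ↥(Pᶜ : Set α) = m := by
    rw [hm, Set.ncard_eq_toFinset_card', Set.toFinset_card]
  apply dimH_le
  intro d hd
  by_contra hlt
  push_neg at hlt
  -- hlt : ofReal (logb R m) < d
  have hlogb : Real.logb R m < (d : ℝ) := by
    rw [← ENNReal.ofReal_coe_nnreal] at hlt
    exact (ENNReal.ofReal_lt_ofReal_iff_of_nonneg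
      (Real.logb_nonneg hR1 hmR)).1 hlt
  have hbase : (m : ℝ≥0∞) * q ^ (d : ℝ) < 1 := by
    have hRd : ((R : ℝ≥0∞)) ^ (d : ℝ) = ENNReal.ofReal ((R:ℝ) ^ (d:ℝ)) := by
      rw [← ENNReal.ofReal_natCast, ENNReal.ofReal_rpow_of_pos (by positivity)]
    have hmlt : (m : ℝ≥0∞) < (R : ℝ≥0∞) ^ (d : ℝ) := by
      rw [hRd, ← ENNReal.ofReal_natCast]
      rw [ENNReal.ofReal_lt_ofReal_iff (by positivity)]
      exact (Real.logb_lt_iff_lt_rpow hR1 (by positivity)).1 hlogb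
    rw [hq, ENNReal.inv_rpow, ← div_eq_mul_inv,
      ENNReal.div_lt_iff (Or.inl ?_) (Or.inl ?_)]
    · simpa using hmlt
    · refine (ENNReal.rpow_pos ?_ ?_).ne'
      · exact_mod_cast lt_of_lt_of_le Nat.zero_lt_two hcard
      · simp
    · exact ENNReal.rpow_ne_top_of_nonneg d.2 (by simp)
  set t : ∀ _ : ℕ, (Fin _ → ↥(Pᶜ : Set α)) → Set (ℕ → α) :=
    fun n w => {x : ℕ → α | ∀ i : Fin n, x i = (w i : α)} with ht
  have hdiam : ∀ n (w : Fin n → ↥(Pᶜ : Set α)), EMetric.diam (t n w) ≤ q ^ n := by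
    intro n w
    apply wdiam_le hcard
    intro u hu v hv i hi
    rw [hu ⟨i, hi⟩, hv ⟨i, hi⟩]
  have hμ : μH[(d:ℝ)] {x : ℕ → α | ∀ n, x n ∈ Pᶜ} ≤
      Filter.liminf (fun n => ∑ w : Fin n → ↥(Pᶜ : Set α),
        EMetric.diam (t n w) ^ (d:ℝ)) Filter.atTop := by
    apply MeasureTheory.Measure.hausdorffMeasure_le_liminf_sum (d:ℝ) _ (fun n => q ^ n)
      (ENNReal.tendsto_pow_atTop_nhds_zero_of_lt_one hq1)
    · exact Filter.Eventually.of_forall fun n i => hdiam n i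
    · refine Filter.Eventually.of_forall fun n x hx => Set.mem_iUnion.2 ?_
      exact ⟨fun i => ⟨x i, hx i⟩, fun i => rfl⟩
  have hsum : ∀ n, (∑ w : Fin n → ↥(Pᶜ : Set α), EMetric.diam (t n w) ^ (d:ℝ))
      ≤ ((m : ℝ≥0∞) * q ^ (d:ℝ)) ^ n := by
    intro n
    calc ∑ w : Fin n → ↥(Pᶜ : Set α), EMetric.diam (t n w) ^ (d:ℝ)
        ≤ (Finset.univ : Finset (Fin n → ↥(Pᶜ : Set α))).card • ((q ^ n) ^ (d:ℝ)) := by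
          apply Finset.sum_le_card_nsmul
          intro w _
          exact ENNReal.rpow_le_rpow (hdiam n w) d.2
      _ = ((m : ℝ≥0∞)) ^ n * (q ^ n) ^ (d:ℝ) := by
          rw [nsmul_eq_mul, Finset.card_univ, Fintype.card_fun, hcardPc,
            Fintype.card_fin, Nat.cast_pow]
      _ = ((m : ℝ≥0∞) * q ^ (d:ℝ)) ^ n := by
          rw [mul_pow, ← ENNReal.rpow_natCast q n, ← ENNReal.rpow_mul, mul_comm (n:ℝ),
            ENNReal.rpow_mul, ENNReal.rpow_natCast]
  have h0 : μH[(d:ℝ)] {x : ℕ → α | ∀ n, x n ∈ Pᶜ} = 0 := by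
    refine le_antisymm ?_ zero_le
    refine le_trans hμ ?_
    have : Filter.liminf (fun n => ((m : ℝ≥0∞) * q ^ (d:ℝ)) ^ n) Filter.atTop = 0 :=
      (ENNReal.tendsto_pow_atTop_nhds_zero_of_lt_one hbase).liminf_eq
    rw [← this]
    exact Filter.liminf_le_liminf (Filter.Eventually.of_forall hsum)
  rw [h0] at hd
  exact ENNReal.zero_ne_top hd


noncomputable def wf (m : ℕ) (c : α → ℕ) (x : ℕ → α) : ℝ :=
  ∑' n, (c (x n) : ℝ) * ((m : ℝ)⁻¹) ^ (n + 1)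

set_option maxHeartbeats 1000000 in
lemma wf_summable {m : ℕ} (hm : 2 ≤ m) {c : α → ℕ} (hc : ∀ a, c a < m) (x : ℕ → α) :
    Summable (fun n => (c (x n) : ℝ) * ((m : ℝ)⁻¹) ^ (n + 1)) := by
  have hm0 : (0:ℝ) < m := by positivity
  have hq1 : (m:ℝ)⁻¹ < 1 := by
    rw [inv_lt_one_iff₀]
    right; exact_mod_cast lt_of_lt_of_le one_lt_two hm
  apply Summable.of_nonneg_of_le (fun n => by positivity) (fun n => ?_)
    (summable_geometric_of_lt_one (by positivity) hq1)
  calc (c (x n) : ℝ) * ((m : ℝ)⁻¹) ^ (n + 1)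
      ≤ (m : ℝ) * ((m : ℝ)⁻¹) ^ (n + 1) := by
        apply mul_le_mul_of_nonneg_right _ (by positivity)
        exact_mod_cast (hc (x n)).le
    _ = ((m : ℝ)⁻¹) ^ n := by
        rw [pow_succ', ← mul_assoc, mul_inv_cancel₀ hm0.ne', one_mul]

set_option maxHeartbeats 1000000 in
lemma wf_tail_le {m : ℕ} (hm : 2 ≤ m) {c : α → ℕ} (hc : ∀ a, c a < m) (x : ℕ → α) (k : ℕ) :
    ∑' n, (c (x (n + k)) : ℝ) * ((m : ℝ)⁻¹) ^ (n + k + 1) ≤ ((m : ℝ)⁻¹) ^ k := by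
  have hm0 : (0:ℝ) < m := by positivity
  have hm1 : (1:ℝ) < m := by exact_mod_cast lt_of_lt_of_le one_lt_two hm
  have hq0 : (0:ℝ) < (m:ℝ)⁻¹ := by positivity
  have hq1 : (m:ℝ)⁻¹ < 1 := by rw [inv_lt_one_iff₀]; right; exact hm1
  have hsum : Summable (fun n : ℕ => (c (x (n + k)) : ℝ) * ((m : ℝ)⁻¹) ^ (n + k + 1)) :=
    (summable_nat_add_iff k).2 (wf_summable hm hc x)
  have hgeo : Summable (fun n : ℕ => (((m:ℝ) - 1) * ((m : ℝ)⁻¹) ^ (k + 1)) * ((m : ℝ)⁻¹) ^ n) :=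
    (summable_geometric_of_lt_one hq0.le hq1).mul_left _
  calc ∑' n, (c (x (n + k)) : ℝ) * ((m : ℝ)⁻¹) ^ (n + k + 1)
      ≤ ∑' n : ℕ, (((m:ℝ) - 1) * ((m : ℝ)⁻¹) ^ (k + 1)) * ((m : ℝ)⁻¹) ^ n := by
        apply Summable.tsum_le_tsum _ hsum hgeo
        intro n
        have h1 : (c (x (n + k)) : ℝ) ≤ (m:ℝ) - 1 := by
          have := hc (x (n + k))
          have : (c (x (n + k)) : ℝ) < m := by exact_mod_cast this
          have hZ : (c (x (n + k)) : ℝ) + 1 ≤ m := by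
            have := hc (x (n + k)); exact_mod_cast Nat.succ_le_of_lt this
          linarith
        calc (c (x (n + k)) : ℝ) * ((m : ℝ)⁻¹) ^ (n + k + 1)
            ≤ ((m:ℝ) - 1) * ((m : ℝ)⁻¹) ^ (n + k + 1) :=
              mul_le_mul_of_nonneg_right h1 (by positivity)
          _ = (((m:ℝ) - 1) * ((m : ℝ)⁻¹) ^ (k + 1)) * ((m : ℝ)⁻¹) ^ n := by
              rw [mul_assoc, ← pow_add]; ring_nf
    _ = ((m:ℝ) - 1) * ((m : ℝ)⁻¹) ^ (k + 1) * (1 - (m:ℝ)⁻¹)⁻¹ := by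
        rw [tsum_mul_left, tsum_geometric_of_lt_one hq0.le hq1]
    _ = ((m : ℝ)⁻¹) ^ k := by
        have h1q : 1 - (m:ℝ)⁻¹ = ((m:ℝ) - 1) / m := by field_simp
        have hne : (m:ℝ) - 1 ≠ 0 := by linarith
        rw [h1q, inv_div, pow_succ]
        field_simp

set_option maxHeartbeats 1000000 in
lemma wf_diff {m : ℕ} (hm : 2 ≤ m) {c : α → ℕ} (hc : ∀ a, c a < m) {x y : ℕ → α} {k : ℕ}
    (h : ∀ i < k, x i = y i) :
    |wf m c x - wf m c y| ≤ ((m : ℝ)⁻¹) ^ k := by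
  have hsx := wf_summable hm hc x
  have hsy := wf_summable hm hc y
  have hx : wf m c x = (∑ i ∈ Finset.range k, (c (x i) : ℝ) * ((m : ℝ)⁻¹) ^ (i + 1))
      + ∑' n, (c (x (n + k)) : ℝ) * ((m : ℝ)⁻¹) ^ (n + k + 1) :=
    (Summable.sum_add_tsum_nat_add k hsx).symm
  have hy : wf m c y = (∑ i ∈ Finset.range k, (c (y i) : ℝ) * ((m : ℝ)⁻¹) ^ (i + 1))
      + ∑' n, (c (y (n + k)) : ℝ) * ((m : ℝ)⁻¹) ^ (n + k + 1) :=
    (Summable.sum_add_tsum_nat_add k hsy).symm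
  have hhead : (∑ i ∈ Finset.range k, (c (x i) : ℝ) * ((m : ℝ)⁻¹) ^ (i + 1))
      = ∑ i ∈ Finset.range k, (c (y i) : ℝ) * ((m : ℝ)⁻¹) ^ (i + 1) := by
    apply Finset.sum_congr rfl
    intro i hi
    rw [h i (Finset.mem_range.1 hi)]
  have htx := wf_tail_le hm hc x k
  have hty := wf_tail_le hm hc y k
  have htx0 : 0 ≤ ∑' n, (c (x (n + k)) : ℝ) * ((m : ℝ)⁻¹) ^ (n + k + 1) :=
    tsum_nonneg fun n => by positivity
  have hty0 : 0 ≤ ∑' n, (c (y (n + k)) : ℝ) * ((m : ℝ)⁻¹) ^ (n + k + 1) :=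
    tsum_nonneg fun n => by positivity
  rw [hx, hy, hhead, add_sub_add_left_eq_sub, abs_sub_le_iff]
  constructor <;> linarith


set_option maxHeartbeats 1000000 in
lemma wf_surj {m : ℕ} (hm : 2 ≤ m) {c : α → ℕ} (hc : ∀ a, c a < m) {P : Set α}
    (hs : ∀ d : ℕ, d < m → ∃ a ∈ Pᶜ, c a = d) :
    Set.Ico (0:ℝ) 1 ⊆ wf m c '' {x : ℕ → α | ∀ n, x n ∈ Pᶜ} := by
  intro y hy
  obtain ⟨hy0, hy1⟩ := hy
  have hm0 : (0:ℝ) < m := by positivity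
  have hm1 : (1:ℝ) < m := by exact_mod_cast lt_of_lt_of_le one_lt_two hm
  set D : ℕ → ℤ := fun n => ⌊y * (m:ℝ)^(n+1)⌋ - m * ⌊y * (m:ℝ)^n⌋ with hD
  have key1 : ∀ n, (m:ℤ) * ⌊y * (m:ℝ)^n⌋ ≤ ⌊y * (m:ℝ)^(n+1)⌋ := by
    intro n
    rw [Int.le_floor]
    push_cast
    calc (m:ℝ) * ⌊y * (m:ℝ)^n⌋ ≤ (m:ℝ) * (y * (m:ℝ)^n) :=
          mul_le_mul_of_nonneg_left (Int.floor_le _) hm0.le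
      _ = y * (m:ℝ)^(n+1) := by ring
  have key2 : ∀ n, ⌊y * (m:ℝ)^(n+1)⌋ < (m:ℤ) * ⌊y * (m:ℝ)^n⌋ + m := by
    intro n
    rw [Int.floor_lt]
    push_cast
    calc y * (m:ℝ)^(n+1) = (m:ℝ) * (y * (m:ℝ)^n) := by ring
      _ < (m:ℝ) * (⌊y * (m:ℝ)^n⌋ + 1) :=
          mul_lt_mul_of_pos_left (Int.lt_floor_add_one _) hm0
      _ = (m:ℝ) * ⌊y * (m:ℝ)^n⌋ + m := by ring
  have hD0 : ∀ n, 0 ≤ D n := fun n => sub_nonneg.2 (key1 n)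
  have hDm : ∀ n, D n < m := fun n => by
    have h := key2 n
    have hDe : D n = ⌊y * (m:ℝ)^(n+1)⌋ - (m:ℤ) * ⌊y * (m:ℝ)^n⌋ := rfl
    omega
  have hDn : ∀ n, (D n).toNat < m := fun n => by have := hD0 n; have := hDm n; omega
  choose a hamem hac using fun n => hs (D n).toNat (hDn n)
  refine ⟨a, fun n => hamem n, ?_⟩
  have hcD : ∀ n, (c (a n) : ℝ) = ((D n : ℤ) : ℝ) := by
    intro n
    rw [hac n]
    have h1 : ((D n).toNat : ℤ) = D n := Int.toNat_of_nonneg (hD0 n)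
    exact_mod_cast congrArg (Int.cast : ℤ → ℝ) h1
  set F : ℕ → ℝ := fun n => (⌊y * (m:ℝ)^n⌋ : ℝ) / (m:ℝ)^n with hF
  have hterm : ∀ n, (c (a n) : ℝ) * ((m:ℝ)⁻¹)^(n+1) = F (n+1) - F n := by
    intro n
    rw [hcD n, hF, hD]
    push_cast
    rw [inv_pow]
    field_simp
    ring
  have hpartial : ∀ N, ∑ i ∈ Finset.range N, (c (a i) : ℝ) * ((m:ℝ)⁻¹)^(i+1) = F N := by
    intro N
    rw [Finset.sum_congr rfl (fun i _ => hterm i), Finset.sum_range_sub]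
    have hF0 : F 0 = 0 := by
      have hfl : ⌊y⌋ = 0 := Int.floor_eq_zero_iff.2 (Set.mem_Ico.2 ⟨hy0, hy1⟩)
      rw [hF]
      simp [hfl]
    rw [hF0, sub_zero]
  have hq1 : (m:ℝ)⁻¹ < 1 := by rw [inv_lt_one_iff₀]; right; exact hm1
  have hbound : ∀ N, ‖F N - y‖ ≤ ((m:ℝ)⁻¹)^N := by
    intro N
    have hmN : (0:ℝ) < (m:ℝ)^N := by positivity
    have hz : F N - y = ((⌊y * (m:ℝ)^N⌋ : ℝ) - y * (m:ℝ)^N)/(m:ℝ)^N := by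
      rw [hF]; field_simp
    have habs : |(⌊y * (m:ℝ)^N⌋ : ℝ) - y * (m:ℝ)^N| ≤ 1 := by
      have h1 := Int.floor_le (y * (m:ℝ)^N)
      have h2 := Int.lt_floor_add_one (y * (m:ℝ)^N)
      rw [abs_le]
      constructor <;> linarith
    rw [Real.norm_eq_abs, hz, abs_div, abs_of_pos hmN, div_le_iff₀ hmN]
    have hmm : ((m:ℝ)⁻¹)^N * (m:ℝ)^N = 1 := by
      rw [inv_pow, inv_mul_cancel₀ hmN.ne']
    rw [hmm]
    exact habs
  have htendF : Tendsto F atTop (nhds y) := by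
    have h0 : Tendsto (fun N => ((m:ℝ)⁻¹)^N) atTop (nhds 0) :=
      tendsto_pow_atTop_nhds_zero_of_lt_one (by positivity) hq1
    have h1 : Tendsto (fun N => F N - y) atTop (nhds 0) :=
      squeeze_zero_norm hbound h0
    have := h1.add_const y
    simpa using this
  have hhs : HasSum (fun n => (c (a n) : ℝ) * ((m:ℝ)⁻¹)^(n+1)) (wf m c a) :=
    (wf_summable hm hc a).hasSum
  have h2 := hhs.tendsto_sum_nat
  rw [show (fun N => ∑ i ∈ Finset.range N, (c (a i) : ℝ) * ((m:ℝ)⁻¹)^(i+1)) = F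
    from funext hpartial] at h2
  exact tendsto_nhds_unique h2 htendF


set_option maxHeartbeats 1000000 in
lemma le_dimH_S (hcard : 2 ≤ Fintype.card α) (P : Set α) (hm2 : 2 ≤ (Pᶜ : Set α).ncard) :
    ENNReal.ofReal (Real.logb (Fintype.card α) ((Pᶜ : Set α).ncard)) ≤
      dimH {x : ℕ → α | ∀ n, x n ∈ Pᶜ} := by
  classical
  set R := Fintype.card α with hR
  set m := (Pᶜ : Set α).ncard with hm
  have hR1 : (1:ℝ) < R := by exact_mod_cast hcard
  have hm1 : (1:ℝ) < m := by exact_mod_cast hm2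
  have hR0 : (0:ℝ) < R := lt_trans one_pos hR1
  have hm0 : (0:ℝ) < m := lt_trans one_pos hm1
  letI : Fintype ↥(Pᶜ : Set α) := (Set.toFinite _).fintype
  have hcardPc : Fintype.card ↥(Pᶜ : Set α) = m := by
    rw [hm, Set.ncard_eq_toFinset_card', Set.toFinset_card]
  set e : ↥(Pᶜ : Set α) ≃ Fin m := Fintype.equivFinOfCardEq hcardPc with he
  set c : α → ℕ := fun a => if h : a ∈ (Pᶜ : Set α) then (e ⟨a, h⟩ : ℕ) else 0 with hcdef
  have hc : ∀ a, c a < m := by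
    intro a
    by_cases h : a ∈ (Pᶜ : Set α)
    · simp only [hcdef, dif_pos h]
      exact (e _).2
    · simp only [hcdef, dif_neg h]
      omega
  have hcs : ∀ d : ℕ, d < m → ∃ a ∈ Pᶜ, c a = d := by
    intro d hd
    refine ⟨(e.symm ⟨d, hd⟩ : α), (e.symm ⟨d, hd⟩).2, ?_⟩
    simp only [hcdef, dif_pos (e.symm ⟨d, hd⟩).2]
    have h1 : (⟨(e.symm ⟨d, hd⟩ : α), (e.symm ⟨d, hd⟩).2⟩ : ↥(Pᶜ : Set α)) = e.symm ⟨d, hd⟩ :=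
      Subtype.eta _ _
    rw [h1, Equiv.apply_symm_apply]
  set σ : ℝ≥0 := Real.toNNReal (Real.logb R m) with hσ
  have hσR : (σ : ℝ) = Real.logb R m := Real.coe_toNNReal _ (Real.logb_nonneg hR1 hm1.le)
  have hσ0 : 0 < σ := Real.toNNReal_pos.2 (Real.logb_pos hR1 hm1)
  have hRm : (R:ℝ) ^ (σ:ℝ) = m := by
    rw [hσR]; exact Real.rpow_logb hR0 (ne_of_gt hR1) hm0
  have hkey : ∀ k : ℕ, ((m:ℝ)⁻¹) ^ k = (((R:ℝ)⁻¹) ^ k) ^ (σ:ℝ) := by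
    intro k
    rw [inv_pow, inv_pow, Real.inv_rpow (by positivity)]
    congr 1
    rw [← Real.rpow_natCast (R:ℝ) k, ← Real.rpow_mul hR0.le, mul_comm,
      Real.rpow_mul hR0.le, Real.rpow_natCast, hRm]
  have hholder : HolderOnWith 1 σ (wf m c) {x : ℕ → α | ∀ n, x n ∈ Pᶜ} := by
    intro x _ y _
    rcases eq_or_ne x y with rfl | hne
    · simp
    · have hdiff := wf_diff hm2 hc
        (fun i hi => PiNat.apply_eq_of_lt_firstDiff (x := x) (y := y) hi)
      rw [wedist_eq_of_ne hne, edist_dist, Real.dist_eq, ENNReal.coe_one, one_mul]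
      have hRq : ((R : ℝ≥0∞))⁻¹ ^ PiNat.firstDiff x y
          = ENNReal.ofReal (((R:ℝ)⁻¹) ^ PiNat.firstDiff x y) := by
        rw [ENNReal.ofReal_pow (by positivity), ENNReal.ofReal_inv_of_pos hR0,
          ENNReal.ofReal_natCast]
      rw [hRq, ENNReal.ofReal_rpow_of_pos (by positivity)]
      apply ENNReal.ofReal_le_ofReal
      rw [← hkey]
      exact hdiff
  have himg := hholder.dimH_image_le hσ0
  have h1 : (1:ℝ≥0∞) ≤ dimH (wf m c '' {x : ℕ → α | ∀ n, x n ∈ Pᶜ}) := by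
    have hIco : dimH (Set.Ico (0:ℝ) 1) = 1 := by
      rw [Real.dimH_of_nonempty_interior (E := ℝ)]
      · simp
      · rw [interior_Ico]
        exact ⟨1/2, by norm_num⟩
    rw [← hIco]
    exact dimH_mono (wf_surj hm2 hc hcs)
  have hfin : (1:ℝ≥0∞) ≤ dimH {x : ℕ → α | ∀ n, x n ∈ Pᶜ} / σ := le_trans h1 himg
  rw [ENNReal.le_div_iff_mul_le (Or.inl (by exact_mod_cast hσ0.ne'))
    (Or.inl ENNReal.coe_ne_top), one_mul] at hfin
  exact hfin

end Aux

section Main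

attribute [local instance] wspace

theorem dimH_fairness_complement {α : Type*} [Fintype α] (hcard : 2 ≤ Fintype.card α)
    (P : Set α) (hPc : (Pᶜ : Set α).Nonempty) :
    wdimH {x : ℕ → α | ∃ N, ∀ n ≥ N, x n ∉ P} =
      ENNReal.ofReal (Real.logb (Fintype.card α) ((Pᶜ : Set α).ncard)) := by
  classical
  have hm1 : 0 < (Pᶜ : Set α).ncard := (Set.ncard_pos (Set.toFinite _)).2 hPc
  rw [wdimH_eq, dimH_fair_eq hcard]
  apply le_antisymm
  · exact dimH_S_le hcard P hm1
  · rcases lt_or_ge ((Pᶜ : Set α).ncard) 2 with h2 | h2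
    · have h1 : (Pᶜ : Set α).ncard = 1 := by omega
      rw [h1]
      simp
    · exact le_dimH_S hcard P h2

end Main
end

section
/- Let Σ = 2^{{a,b}} be the 4-symbol alphabet of valuations of variables a, b. Let L_inv = {x : ∀ n, a ∈ x n → b ∈ x (n+1)} (language of G(a → X b)). Let φ₁c = L_inv ∩ {x : ∃N, ∀n≥N, a ∉ x n} and φ₂c = L_inv ∩ {x : ∃N, ∀n≥N, b ∉ x n}. Then dimH(φ₁c) = 1/2 and dimH(φ₂c) = 0 in the metric d(u,v) = 4^{-(common prefix length)}. -/
open Filter MeasureTheory Set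
open scoped ENNReal

namespace ExampleDim

noncomputable instance instE : EMetricSpace (ℕ → Set Bool) := wspace (Set Bool)

noncomputable instance (priority := 5000) instT : TopologicalSpace (ℕ → Set Bool) :=
  instE.toUniformSpace.toTopologicalSpace

noncomputable instance (priority := 5000) instM : MeasurableSpace (ℕ → Set Bool) := borel _

instance instB : BorelSpace (ℕ → Set Bool) := ⟨rfl⟩

lemma card4 : (Fintype.card (Set Bool) : ℝ≥0∞) = 4 := by
  have : Fintype.card (Set Bool) = 4 := by simp
  rw [this]; norm_num

lemma edist_eq {u v : ℕ → Set Bool} (h : u ≠ v) :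
    edist u v = (4 : ℝ≥0∞)⁻¹ ^ (PiNat.firstDiff u v) := by
  show wedist u v = _
  rw [wedist, if_neg h, card4]

lemma edist_le_of_agree {u v : ℕ → Set Bool} {n : ℕ} (h : ∀ i < n, u i = v i) :
    edist u v ≤ (4 : ℝ≥0∞)⁻¹ ^ n := by
  rcases eq_or_ne u v with rfl | hne
  · simp
  · rw [edist_eq hne]
    apply pow_le_pow_of_le_one zero_le (by norm_num)
    by_contra hlt
    push_neg at hlt
    exact PiNat.apply_firstDiff_ne hne (h _ hlt)


open scoped Classical

/-- Binary-expansion evaluation map. -/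
noncomputable def hmap (x : ℕ → Set Bool) : ℝ :=
  ∑' n, (if false ∈ x n then ((2:ℝ)⁻¹) ^ (n+1) else 0)

lemma summable_geom_aux : Summable fun n : ℕ => ((2:ℝ)⁻¹) ^ (n+1) := by
  simpa [pow_succ, mul_comm] using
    (summable_geometric_of_lt_one (by norm_num : (0:ℝ) ≤ 2⁻¹)
      (by norm_num : (2:ℝ)⁻¹ < 1)).mul_right (2:ℝ)⁻¹

lemma summable_ite (x : ℕ → Set Bool) :
    Summable fun n => (if false ∈ x n then ((2:ℝ)⁻¹) ^ (n+1) else 0) := by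
  apply Summable.of_nonneg_of_le (fun n => ?_) (fun n => ?_) summable_geom_aux
  · split_ifs <;> positivity
  · split_ifs with h
    · exact le_rfl
    · positivity

lemma summable_c (k : ℕ) :
    Summable (fun n => if n < k then 0 else ((2:ℝ)⁻¹) ^ (n+1)) := by
  apply Summable.of_nonneg_of_le (fun n => ?_) (fun n => ?_) summable_geom_aux
  · split_ifs <;> positivity
  · split_ifs
    · positivity
    · exact le_rfl

lemma tsum_tail (k : ℕ) :
    ∑' n, (if n < k then 0 else ((2:ℝ)⁻¹) ^ (n+1)) = ((2:ℝ)⁻¹) ^ k := by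
  set c : ℕ → ℝ := fun n => if n < k then 0 else ((2:ℝ)⁻¹) ^ (n+1) with hc
  have key := (summable_c k).sum_add_tsum_nat_add k
  have h1 : ∑ i ∈ Finset.range k, c i = 0 := by
    apply Finset.sum_eq_zero
    intro i hi
    simp [hc, Finset.mem_range.1 hi]
  have h2 : ∑' i, c (i + k) = ((2:ℝ)⁻¹) ^ k := by
    have heq : ∀ i : ℕ, c (i + k) = ((2:ℝ)⁻¹) ^ (k+1) * ((2:ℝ)⁻¹) ^ i := by
      intro i
      simp only [hc, if_neg (by omega : ¬ i + k < k)]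
      ring
    rw [tsum_congr heq, tsum_mul_left,
      tsum_geometric_of_lt_one (by norm_num) (by norm_num)]
    rw [pow_succ]
    norm_num
    ring
  rw [← key, h1, h2, zero_add]

lemma abs_hmap_sub_le (u v : ℕ → Set Bool) :
    |hmap u - hmap v| ≤ ((2:ℝ)⁻¹) ^ (PiNat.firstDiff u v) := by
  set k := PiNat.firstDiff u v
  set a : ℕ → ℝ := fun n => if false ∈ u n then ((2:ℝ)⁻¹) ^ (n+1) else 0 with ha
  set b : ℕ → ℝ := fun n => if false ∈ v n then ((2:ℝ)⁻¹) ^ (n+1) else 0 with hb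
  have hna : Summable a := summable_ite u
  have hnb : Summable b := summable_ite v
  have hmapsub : hmap u - hmap v = ∑' n, (a n - b n) := (Summable.tsum_sub hna hnb).symm
  have habs : Summable fun n => |a n - b n| := (hna.sub hnb).abs
  have hle : ∀ n, |a n - b n| ≤ (if n < k then 0 else ((2:ℝ)⁻¹) ^ (n+1)) := by
    intro n
    have hw : (0:ℝ) ≤ ((2:ℝ)⁻¹) ^ (n+1) := by positivity
    by_cases hn : n < k
    · have huv : u n = v n := PiNat.apply_eq_of_lt_firstDiff hn
      simp [ha, hb, huv, hn]
    · rw [if_neg hn]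
      simp only [ha, hb]
      split_ifs
      · simpa using hw
      · rw [sub_zero, abs_of_nonneg hw]
      · rw [zero_sub, abs_neg, abs_of_nonneg hw]
      · simpa using hw
  have step1 : |∑' n, (a n - b n)| ≤ ∑' n, |a n - b n| := by
    simpa [Real.norm_eq_abs] using norm_tsum_le_tsum_norm
      (f := fun n => a n - b n) (by simpa [Real.norm_eq_abs] using habs)
  calc |hmap u - hmap v| = |∑' n, (a n - b n)| := by rw [hmapsub]
    _ ≤ ∑' n, |a n - b n| := step1
    _ ≤ ∑' n, (if n < k then 0 else ((2:ℝ)⁻¹) ^ (n+1)) :=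
        Summable.tsum_le_tsum hle habs (summable_c k)
    _ = ((2:ℝ)⁻¹) ^ k := tsum_tail k

open scoped NNReal

lemma ofReal_half_pow (k : ℕ) :
    ENNReal.ofReal (((2:ℝ)⁻¹) ^ k) = ((2:ℝ≥0∞)⁻¹) ^ k := by
  rw [ENNReal.ofReal_pow (by norm_num)]
  congr 1
  rw [ENNReal.ofReal_inv_of_pos (by norm_num)]
  norm_num

lemma rpow_half (k : ℕ) :
    (((4:ℝ≥0∞)⁻¹) ^ k) ^ ((2:ℝ)⁻¹) = ((2:ℝ≥0∞)⁻¹) ^ k := by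
  have h4 : ((4:ℝ≥0∞)⁻¹) = ((2:ℝ≥0∞)⁻¹) ^ (2:ℕ) := by
    rw [← ENNReal.inv_pow]
    norm_num
  rw [h4, ← pow_mul, ← ENNReal.rpow_natCast (((2:ℝ≥0∞))⁻¹) (2*k),
    ← ENNReal.rpow_mul]
  rw [← ENNReal.rpow_natCast (((2:ℝ≥0∞))⁻¹) k]
  congr 1
  push_cast
  ring

lemma hmap_holder : HolderWith 1 (2⁻¹ : ℝ≥0) hmap := by
  intro u v
  rcases eq_or_ne u v with rfl | hne
  · simp
  · have hd : edist u v = (4 : ℝ≥0∞)⁻¹ ^ (PiNat.firstDiff u v) := edist_eq hne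
    rw [hd, ENNReal.coe_one, one_mul]
    have hco : ((2⁻¹ : ℝ≥0) : ℝ) = (2:ℝ)⁻¹ := by norm_num
    rw [hco, rpow_half]
    have h1 : edist (hmap u) (hmap v) = ENNReal.ofReal |hmap u - hmap v| := by
      rw [edist_dist, Real.dist_eq]
    rw [h1, ← ofReal_half_pow]
    exact ENNReal.ofReal_le_ofReal (abs_hmap_sub_le u v)

/-- The "tail" language: `a` never holds. -/
def T : Set (ℕ → Set Bool) := {x | ∀ n, true ∉ x n}

lemma partial_sum_floor {t : ℝ} (ht0 : 0 ≤ t) (ht1 : t < 1) (N : ℕ) :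
    ∑ n ∈ Finset.range N, ((Nat.floor (t * 2 ^ (n+1)) % 2 : ℕ) : ℝ) * ((2:ℝ)⁻¹) ^ (n+1)
      = ((Nat.floor (t * 2 ^ N) : ℕ) : ℝ) / 2 ^ N := by
  induction N with
  | zero => simp [Nat.floor_eq_zero.2 ht1]
  | succ N ih =>
      rw [Finset.sum_range_succ, ih]
      set m : ℕ := Nat.floor (t * 2 ^ (N+1)) with hm
      have hdiv : Nat.floor (t * 2 ^ N) = m / 2 := by
        have h2 : t * 2 ^ N = t * 2 ^ (N+1) / ((2:ℕ) : ℝ) := by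
          push_cast; ring
        rw [h2, Nat.floor_div_natCast (t * 2 ^ (N+1)) 2]
      rw [hdiv]
      have hmod : (2 * (m / 2) + m % 2 : ℕ) = m := Nat.div_add_mod m 2
      have hcast : ((m:ℝ)) = 2 * ((m / 2 : ℕ) : ℝ) + ((m % 2 : ℕ) : ℝ) := by
        exact_mod_cast hmod.symm
      rw [hcast]
      rw [inv_pow]
      field_simp
      ring

lemma hmap_surj {t : ℝ} (ht : t ∈ Ioo (0:ℝ) 1) : ∃ x ∈ T, hmap x = t := by
  obtain ⟨ht0, ht1⟩ := ht
  refine ⟨fun n => if Nat.floor (t * 2 ^ (n+1)) % 2 = 1 then {false} else ∅, ?_, ?_⟩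
  · intro n
    simp only []
    split_ifs <;> simp
  · have hterm : ∀ n : ℕ,
        (if false ∈ (if Nat.floor (t * 2 ^ (n+1)) % 2 = 1 then ({false} : Set Bool) else ∅)
          then ((2:ℝ)⁻¹) ^ (n+1) else 0)
        = ((Nat.floor (t * 2 ^ (n+1)) % 2 : ℕ) : ℝ) * ((2:ℝ)⁻¹) ^ (n+1) := by
      intro n
      by_cases h : Nat.floor (t * 2 ^ (n+1)) % 2 = 1
      · simp [h]
      · have h0 : Nat.floor (t * 2 ^ (n+1)) % 2 = 0 := by omega
        simp [h, h0]
    rw [hmap, tsum_congr hterm]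
    -- the partial sums tend to `t`
    set f : ℕ → ℝ := fun n => ((Nat.floor (t * 2 ^ (n+1)) % 2 : ℕ) : ℝ) * ((2:ℝ)⁻¹) ^ (n+1)
      with hf
    have hsumm : Summable f := by
      apply Summable.of_nonneg_of_le (fun n => by positivity) (fun n => ?_) summable_geom_aux
      have h1 : (Nat.floor (t * 2 ^ (n+1)) % 2 : ℕ) ≤ 1 := by omega
      calc f n ≤ 1 * ((2:ℝ)⁻¹) ^ (n+1) := by
            apply mul_le_mul_of_nonneg_right _ (by positivity)
            exact_mod_cast h1
        _ = ((2:ℝ)⁻¹) ^ (n+1) := one_mul _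
    have htend : Tendsto (fun N => ∑ n ∈ Finset.range N, f n) atTop (nhds t) := by
      have heq : ∀ N, ∑ n ∈ Finset.range N, f n = ((Nat.floor (t * 2 ^ N) : ℕ) : ℝ) / 2 ^ N :=
        fun N => partial_sum_floor ht0.le ht1 N
      rw [funext heq]
      have hlow : Tendsto (fun N : ℕ => t - ((2:ℝ)⁻¹) ^ N) atTop (nhds t) := by
        have := tendsto_pow_atTop_nhds_zero_of_lt_one (by norm_num : (0:ℝ) ≤ 2⁻¹)
          (by norm_num : (2:ℝ)⁻¹ < 1)
        simpa using tendsto_const_nhds.sub this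
      apply tendsto_of_tendsto_of_tendsto_of_le_of_le hlow tendsto_const_nhds
      · intro N
        have hfl : t * 2 ^ N < Nat.floor (t * 2 ^ N) + 1 := Nat.lt_floor_add_one _
        have h2 : (0:ℝ) < 2 ^ N := by positivity
        rw [le_div_iff₀ h2]
        have : ((2:ℝ)⁻¹) ^ N * 2 ^ N = 1 := by
          rw [← mul_pow]; norm_num
        nlinarith
      · intro N
        have hfl : ((Nat.floor (t * 2 ^ N) : ℕ) : ℝ) ≤ t * 2 ^ N :=
          Nat.floor_le (by positivity)
        have h2 : (0:ℝ) < 2 ^ N := by positivity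
        rw [div_le_iff₀ h2]
        linarith
    have := hsumm.hasSum.tendsto_sum_nat
    exact tendsto_nhds_unique this htend

lemma half_le_dimH_T : (1/2 : ℝ≥0∞) ≤ dimH T := by
  have himg : Ioo (0:ℝ) 1 ⊆ hmap '' T := by
    intro t ht
    obtain ⟨x, hx, hxt⟩ := hmap_surj ht
    exact ⟨x, hx, hxt⟩
  have h1 : dimH (Ioo (0:ℝ) 1) = 1 := by
    rw [Real.dimH_of_mem_nhds (Ioo_mem_nhds one_half_pos (by norm_num))]
    simp
  have h2 : dimH (hmap '' T) ≤ dimH T / ((2⁻¹ : ℝ≥0) : ℝ≥0∞) :=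
    (hmap_holder.holderOnWith T).dimH_image_le (by norm_num)
  have h3 : (1:ℝ≥0∞) ≤ dimH T / ((2⁻¹ : ℝ≥0) : ℝ≥0∞) := by
    calc (1:ℝ≥0∞) = dimH (Ioo (0:ℝ) 1) := h1.symm
      _ ≤ dimH (hmap '' T) := dimH_mono himg
      _ ≤ _ := h2
  rw [ENNReal.le_div_iff_mul_le (by norm_num) (by norm_num)] at h3
  calc (1/2 : ℝ≥0∞) = 1 * ((2⁻¹ : ℝ≥0) : ℝ≥0∞) := by
        rw [one_mul]
        simp [ENNReal.coe_inv]
  _ ≤ dimH T := h3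

/-- Tail language: `a` forbidden from time `N` on. -/
def SN (N : ℕ) : Set (ℕ → Set Bool) := {x | ∀ n ≥ N, true ∉ x n}

lemma dimH_SN_le (N : ℕ) : dimH (SN N) ≤ 1/2 := by
  by_contra hlt
  push_neg at hlt
  obtain ⟨d, hd1, hd2⟩ := ENNReal.lt_iff_exists_nnreal_btwn.1 hlt
  have hcoe : ((1/2 : ℝ≥0) : ℝ≥0∞) = 1/2 := by
    rw [ENNReal.coe_div (by norm_num)]; norm_num
  have hd : (1/2 : ℝ) < (d:ℝ) := by
    rw [← hcoe, ENNReal.coe_lt_coe] at hd1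
    exact_mod_cast hd1
  have hinf : μH[(d:ℝ)] (SN N) = ∞ := hausdorffMeasure_of_lt_dimH hd2
  set q' : ℝ≥0∞ := ((4:ℝ≥0∞)⁻¹) ^ (d:ℝ) with hq'
  have hd0 : (0:ℝ) ≤ (d:ℝ) := d.coe_nonneg
  have hqhalf : q' < (2:ℝ≥0∞)⁻¹ := by
    have h1 : q' < ((4:ℝ≥0∞)⁻¹) ^ ((2:ℝ)⁻¹) :=
      ENNReal.rpow_lt_rpow_of_exponent_gt (by norm_num)
        (by rw [ENNReal.inv_lt_one]; norm_num)
        (by rw [show ((2:ℝ)⁻¹) = 1/2 by norm_num]; exact hd)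
    have h2 : ((4:ℝ≥0∞)⁻¹) ^ ((2:ℝ)⁻¹) = (2:ℝ≥0∞)⁻¹ := by
      simpa using rpow_half 1
    rwa [h2] at h1
  -- covering by cylinders of depth `N + n`
  have hzero : μH[(d:ℝ)] (SN N) = 0 := by
    set t : ∀ n : ℕ, ((Fin N → Set Bool) × (Fin n → Bool)) → Set (ℕ → Set Bool) :=
      fun n pq => {x | (∀ k : Fin N, x k = pq.1 k) ∧
        ∀ j : Fin n, x (N + j) = (if pq.2 j then {false} else ∅)} with htdef
    set r : ℕ → ℝ≥0∞ := fun n => ((4:ℝ≥0∞)⁻¹) ^ (N + n) with hrdef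
    have hr : Tendsto r atTop (nhds 0) := by
      have h1 : Tendsto (fun n : ℕ => ((4:ℝ≥0∞)⁻¹) ^ n) atTop (nhds 0) :=
        ENNReal.tendsto_pow_atTop_nhds_zero_of_lt_one (by
          rw [ENNReal.inv_lt_one]; norm_num)
      have h2 : Tendsto (fun n : ℕ => ((4:ℝ≥0∞)⁻¹) ^ N * ((4:ℝ≥0∞)⁻¹) ^ n) atTop (nhds 0) := by
        have := ENNReal.Tendsto.const_mul (a := ((4:ℝ≥0∞)⁻¹) ^ N) h1
          (Or.inr (by simp))
        simpa using this
      simpa [hrdef, pow_add] using h2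
    have ht : ∀ n, ∀ i, EMetric.diam (t n i) ≤ r n := by
      intro n i
      apply EMetric.diam_le
      intro u hu v hv
      apply edist_le_of_agree
      intro m hm
      by_cases hmN : m < N
      · rw [hu.1 ⟨m, hmN⟩, ← hv.1 ⟨m, hmN⟩]
      · push_neg at hmN
        have hj : m - N < n := by omega
        have h1 := hu.2 ⟨m - N, hj⟩
        have h2 := hv.2 ⟨m - N, hj⟩
        simp only at h1 h2
        rw [show N + (m - N) = m by omega] at h1 h2
        rw [h1, h2]
    have hst : ∀ n, SN N ⊆ ⋃ i, t n i := by
      intro n x hx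
      refine mem_iUnion.2 ⟨⟨fun k => x k, fun j => if false ∈ x (N + j) then true else false⟩,
        fun k => rfl, fun j => ?_⟩
      have hxj : true ∉ x (N + (j:ℕ)) := hx (N + (j:ℕ)) (by omega)
      by_cases hf : false ∈ x (N + (j:ℕ))
      · have hxe : x (N + (j:ℕ)) = {false} := by
          ext z
          cases z
          · simp [hf]
          · simp [hxj]
        rw [hxe]
        simp [hf]
      · have hxe : x (N + (j:ℕ)) = ∅ := by
          ext z
          cases z
          · simp [hf]
          · simp [hxj]
        rw [hxe]
        simp [hf]
    have key := MeasureTheory.Measure.hausdorffMeasure_le_liminf_sum (d:ℝ) (SN N) r hr t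
      (Eventually.of_forall ht) (Eventually.of_forall hst)
    -- bound the sums
    set C : ℝ≥0∞ := (4:ℝ≥0∞) ^ N * q' ^ N with hC
    have hCtop : C ≠ ∞ := by
      apply ENNReal.mul_ne_top
      · exact ENNReal.pow_ne_top (by norm_num)
      · exact ENNReal.pow_ne_top (hqhalf.trans (by norm_num)).ne
    have hsumle : ∀ n : ℕ,
        (∑ i : (Fin N → Set Bool) × (Fin n → Bool), EMetric.diam (t n i) ^ (d:ℝ))
          ≤ C * ((2:ℝ≥0∞) * q') ^ n := by
      intro n
      have hcard : (Fintype.card ((Fin N → Set Bool) × (Fin n → Bool)) : ℝ≥0∞)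
          = (4:ℝ≥0∞) ^ N * (2:ℝ≥0∞) ^ n := by
        rw [Fintype.card_prod, Fintype.card_fun, Fintype.card_fun]
        have h4 : Fintype.card (Set Bool) = 4 := by simp
        rw [h4]
        push_cast
        simp
      have hrd : ∀ i, EMetric.diam (t n i) ^ (d:ℝ) ≤ q' ^ (N + n) := by
        intro i
        calc EMetric.diam (t n i) ^ (d:ℝ) ≤ (r n) ^ (d:ℝ) :=
              ENNReal.rpow_le_rpow (ht n i) hd0
          _ = q' ^ (N + n) := by
              simp only [hrdef, hq']
              rw [← ENNReal.rpow_natCast ((4:ℝ≥0∞)⁻¹) (N + n), ← ENNReal.rpow_mul,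
                mul_comm ((N + n : ℕ):ℝ) (d:ℝ), ENNReal.rpow_mul,
                ENNReal.rpow_natCast]
      calc (∑ i : (Fin N → Set Bool) × (Fin n → Bool), EMetric.diam (t n i) ^ (d:ℝ))
          ≤ ∑ _i : (Fin N → Set Bool) × (Fin n → Bool), q' ^ (N + n) :=
            Finset.sum_le_sum (fun i _ => hrd i)
        _ = (Fintype.card ((Fin N → Set Bool) × (Fin n → Bool)) : ℝ≥0∞) * q' ^ (N + n) := by
            rw [Finset.sum_const, Finset.card_univ, nsmul_eq_mul]
        _ = C * ((2:ℝ≥0∞) * q') ^ n := by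
            rw [hcard, hC, pow_add, mul_pow]
            ring
    have hrho : (2:ℝ≥0∞) * q' < 1 := by
      calc (2:ℝ≥0∞) * q' < 2 * 2⁻¹ := by
            rw [ENNReal.mul_lt_mul_iff_right (by norm_num) (by norm_num)]
            exact hqhalf
        _ = 1 := by
            rw [ENNReal.mul_inv_cancel] <;> norm_num
    have htend : Tendsto (fun n : ℕ => C * ((2:ℝ≥0∞) * q') ^ n) atTop (nhds 0) := by
      have h1 := ENNReal.tendsto_pow_atTop_nhds_zero_of_lt_one hrho
      have := ENNReal.Tendsto.const_mul (a := C) h1 (Or.inr hCtop)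
      simpa using this
    have hliminf : liminf (fun n : ℕ =>
        ∑ i : (Fin N → Set Bool) × (Fin n → Bool), EMetric.diam (t n i) ^ (d:ℝ)) atTop = 0 := by
      apply le_antisymm _ zero_le
      calc liminf (fun n : ℕ =>
          ∑ i : (Fin N → Set Bool) × (Fin n → Bool), EMetric.diam (t n i) ^ (d:ℝ)) atTop
          ≤ liminf (fun n : ℕ => C * ((2:ℝ≥0∞) * q') ^ n) atTop :=
            liminf_le_liminf (Eventually.of_forall hsumle)
        _ = 0 := htend.liminf_eq
    replace key := key.trans_eq hliminf
    exact le_antisymm key zero_le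
  rw [hzero] at hinf
  exact (ENNReal.zero_ne_top hinf).elim

lemma finite_EN (N : ℕ) : {x : ℕ → Set Bool | ∀ n ≥ N, x n = ∅}.Finite := by
  rw [← Set.finite_coe_iff]
  apply Finite.of_injective (fun x : {x : ℕ → Set Bool // ∀ n ≥ N, x n = ∅} =>
    (fun k : Fin N => x.1 k))
  intro x y hxy
  apply Subtype.ext
  funext n
  rcases lt_or_ge n N with h | h
  · exact congrFun hxy ⟨n, h⟩
  · rw [x.2 n h, y.2 n h]

lemma countable_E : {x : ℕ → Set Bool | ∃ N, ∀ n ≥ N, x n = ∅}.Countable := by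
  have he : {x : ℕ → Set Bool | ∃ N, ∀ n ≥ N, x n = ∅}
      = ⋃ N, {x : ℕ → Set Bool | ∀ n ≥ N, x n = ∅} := by
    ext x; simp [Set.mem_iUnion]
  rw [he]
  exact countable_iUnion fun N => (finite_EN N).countable

lemma part1 : dimH ({x : ℕ → Set Bool | ∀ n, true ∈ x n → false ∈ x (n + 1)} ∩
    {x : ℕ → Set Bool | ∃ N, ∀ n ≥ N, true ∉ x n}) = 1 / 2 := by
  apply le_antisymm
  · calc dimH ({x : ℕ → Set Bool | ∀ n, true ∈ x n → false ∈ x (n + 1)} ∩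
        {x : ℕ → Set Bool | ∃ N, ∀ n ≥ N, true ∉ x n})
        ≤ dimH (⋃ N, SN N) := by
          apply dimH_mono
          intro x hx
          obtain ⟨N, hN⟩ := hx.2
          exact mem_iUnion.2 ⟨N, hN⟩
      _ = ⨆ N, dimH (SN N) := dimH_iUnion _
      _ ≤ 1/2 := iSup_le dimH_SN_le
  · refine le_trans half_le_dimH_T (dimH_mono ?_)
    intro x hx
    exact ⟨fun n h => absurd h (hx n), 0, fun n _ => hx n⟩

lemma part2 : dimH ({x : ℕ → Set Bool | ∀ n, true ∈ x n → false ∈ x (n + 1)} ∩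
    {x : ℕ → Set Bool | ∃ N, ∀ n ≥ N, false ∉ x n}) = 0 := by
  apply dimH_countable
  apply countable_E.mono
  rintro x ⟨hinv, N, hN⟩
  refine ⟨N, fun n hn => ?_⟩
  ext z
  cases z
  · simpa using hN n hn
  · simp only [Set.mem_empty_iff_false, iff_false]
    intro ht
    exact hN (n+1) (by omega) (hinv n ht)

end ExampleDim

theorem example_dim_pairs :
    wdimH ({x : ℕ → Set Bool | ∀ n, true ∈ x n → false ∈ x (n + 1)} ∩
        {x : ℕ → Set Bool | ∃ N, ∀ n ≥ N, true ∉ x n}) = 1 / 2 ∧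
      wdimH ({x : ℕ → Set Bool | ∀ n, true ∈ x n → false ∈ x (n + 1)} ∩
        {x : ℕ → Set Bool | ∃ N, ∀ n ≥ N, false ∉ x n}) = 0 := by
  unfold wdimH
  exact ⟨ExampleDim.part1, ExampleDim.part2⟩
end

section
/- Let Σ be a finite alphabet of size r ≥ 2, let I ⊆ Σ be nonempty (an initial condition) and let L ⊆ Σ^ω be strongly connected and nonempty, with the shift-compatibility property that L is determined by a relation on consecutive symbols (L = {x : ∀ n, (x n, x (n+1)) ∈ R}). If L' = L ∩ {x : x 0 ∈ I} is nonempty, then dimH(L') = dimH(L). -/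
open Filter MeasureTheory Set
open scoped ENNReal

/-- Concatenation of a finite word and an ω-word. -/
def wcat {α : Type*} {k : ℕ} (u : Fin k → α) (y : ℕ → α) : ℕ → α :=
  fun n => if h : n < k then u ⟨n, h⟩ else y (n - k)

/-- An ω-language is strongly connected if after every prefix `w` of a word of `L`,
some finite continuation `v` leads back to a point where the allowed suffixes are
exactly `L` itself. -/
def StronglyConnected {α : Type*} (L : Set (ℕ → α)) : Prop :=
  ∀ (k : ℕ) (w : Fin k → α), (∃ x ∈ L, ∀ i : Fin k, x i.1 = w i) →
    ∃ (m : ℕ) (v : Fin m → α), {y : ℕ → α | wcat (Fin.append w v) y ∈ L} = L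

section Aux

variable {α : Type*}

theorem wcat_apply_add {k : ℕ} (u : Fin k → α) (y : ℕ → α) (n : ℕ) :
    wcat u y (k + n) = y n := by
  simp [wcat, Nat.add_sub_cancel_left]

theorem wcat_apply_lt {k : ℕ} (u : Fin k → α) (y : ℕ → α) {n : ℕ} (h : n < k) :
    wcat u y n = u ⟨n, h⟩ := by
  simp [wcat, h]

theorem wcat_ne {k : ℕ} (u : Fin k → α) {y z : ℕ → α} (h : y ≠ z) :
    wcat u y ≠ wcat u z := by
  intro heq
  apply PiNat.apply_firstDiff_ne h
  have := congrFun heq (k + PiNat.firstDiff y z)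
  rwa [wcat_apply_add, wcat_apply_add] at this

theorem wcat_firstDiff {k : ℕ} (u : Fin k → α) {y z : ℕ → α} (h : y ≠ z) :
    PiNat.firstDiff (wcat u y) (wcat u z) = k + PiNat.firstDiff y z := by
  refine le_antisymm ?_ ?_
  · refine le_of_not_gt fun hlt => ?_
    have := PiNat.apply_eq_of_lt_firstDiff hlt
    rw [wcat_apply_add, wcat_apply_add] at this
    exact PiNat.apply_firstDiff_ne h this
  · refine le_of_not_gt fun hlt => ?_
    have hne := PiNat.apply_firstDiff_ne (wcat_ne u h)
    set j := PiNat.firstDiff (wcat u y) (wcat u z) with hj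
    rcases lt_or_ge j k with hjk | hjk
    · exact hne (by rw [wcat_apply_lt u y hjk, wcat_apply_lt u z hjk])
    · obtain ⟨n, hn⟩ := Nat.exists_eq_add_of_le hjk
      rw [hn] at hne
      rw [wcat_apply_add, wcat_apply_add] at hne
      exact hne (PiNat.apply_eq_of_lt_firstDiff (by omega))

theorem wedist_wcat [Fintype α] {k : ℕ} (u : Fin k → α) (y z : ℕ → α) :
    wedist (wcat u y) (wcat u z) =
      ((Fintype.card α : ℝ≥0∞))⁻¹ ^ k * wedist y z := by
  rcases eq_or_ne y z with rfl | h
  · simp [wedist]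
  · rw [wedist, wedist, if_neg (wcat_ne u h), if_neg h, wcat_firstDiff u h, pow_add]

end Aux

theorem dimH_initial_condition {α : Type*} [Fintype α] (hcard : 2 ≤ Fintype.card α)
    (R : Set (α × α)) (I : Set α) (hI : I.Nonempty)
    (hL : Set.Nonempty {x : ℕ → α | ∀ n, (x n, x (n + 1)) ∈ R})
    (hsc : StronglyConnected {x : ℕ → α | ∀ n, (x n, x (n + 1)) ∈ R})
    (hL' : Set.Nonempty ({x : ℕ → α | ∀ n, (x n, x (n + 1)) ∈ R} ∩ {x | x 0 ∈ I})) :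
    wdimH ({x : ℕ → α | ∀ n, (x n, x (n + 1)) ∈ R} ∩ {x | x 0 ∈ I}) =
      wdimH {x : ℕ → α | ∀ n, (x n, x (n + 1)) ∈ R} := by
  classical
  letI : EMetricSpace (ℕ → α) := wspace α
  set L : Set (ℕ → α) := {x : ℕ → α | ∀ n, (x n, x (n + 1)) ∈ R} with hLdef
  obtain ⟨x, hxL, hxI⟩ := hL'
  set w : Fin 1 → α := fun _ => x 0 with hwdef
  have hw : ∃ x' ∈ L, ∀ i : Fin 1, x' i.1 = w i :=
    ⟨x, hxL, fun i => by rw [Subsingleton.elim i 0]; rfl⟩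
  obtain ⟨m, v, hset⟩ := hsc 1 w hw
  set u : Fin (1 + m) → α := Fin.append w v with hudef
  set f : (ℕ → α) → (ℕ → α) := wcat u with hfdef
  have hcard0 : (Fintype.card α : ℝ≥0∞) ≠ 0 := by
    exact_mod_cast Nat.one_le_iff_ne_zero.mp (le_trans one_le_two hcard)
  have hq1 : ((Fintype.card α : ℝ≥0∞))⁻¹ ≤ 1 := by
    rw [ENNReal.inv_le_one]
    exact_mod_cast le_trans one_le_two hcard
  have hedist : ∀ y z : ℕ → α, edist (f y) (f z) =
      ((Fintype.card α : ℝ≥0∞))⁻¹ ^ (1 + m) * edist y z := fun y z =>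
    wedist_wcat u y z
  have hLip : LipschitzWith 1 f := by
    intro y z
    rw [hedist y z, ENNReal.coe_one, one_mul]
    exact mul_le_of_le_one_left zero_le (pow_le_one' hq1 _)
  have hAnti : AntilipschitzWith ((Fintype.card α : NNReal) ^ (1 + m)) f := by
    intro y z
    have hKcast : (((Fintype.card α : NNReal) ^ (1 + m) : NNReal) : ℝ≥0∞) =
        (Fintype.card α : ℝ≥0∞) ^ (1 + m) := by push_cast; rfl
    rw [hedist y z, ← mul_assoc, hKcast, ← mul_pow,
      ENNReal.mul_inv_cancel hcard0 (ENNReal.natCast_ne_top _), one_pow, one_mul]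
  have himg : f '' L ⊆ L ∩ {x | x 0 ∈ I} := by
    rintro _ ⟨y, hy, rfl⟩
    refine ⟨?_, ?_⟩
    · have : y ∈ {y : ℕ → α | wcat (Fin.append w v) y ∈ L} := by rw [hset]; exact hy
      exact this
    · have h0 : f y 0 = w 0 := by
        have h01 : (0 : ℕ) < 1 + m := by omega
        rw [hfdef, wcat_apply_lt u y h01, hudef]
        exact Fin.append_left w v 0
      show f y 0 ∈ I
      rw [h0]
      exact hxI
  have key : dimH L = dimH (f '' L) :=
    le_antisymm (hAnti.le_dimH_image L) (hLip.dimH_image_le L)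
  refine le_antisymm (dimH_mono inter_subset_left) ?_
  calc dimH L = dimH (f '' L) := key
    _ ≤ dimH (L ∩ {x | x 0 ∈ I}) := dimH_mono himg
end
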